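/- arXiv:1606.05622 — 2 statements merged into one kernel-verified Lean document; each statement's English description precedes it below -/
import Mathlib

section
/- For every mass ratio μ with 0 < μ < 1/2, set l = (1 − 2√(μ(1−μ)))/(2(1−2μ)). Then 0 < l < 1/2, and a point q ∈ ℝ² ∖ {E, M} is a critical point of the Euler potential V_μ (i.e., the Fréchet derivative of V_μ at q vanishes) if and only if q = (l, 0). -/
/-!
The derivative of `V_μ` at `q` is `⟪c₁ • (q - E) + c₂ • (q - M), ·⟫` with `c₁, c₂ > 0`, so
at a critical point `q` lies on the open segment `EM`, say `q = E + t • (M - E)`. There the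
gradient is `(1 - μ) (1 - t)² - μ t²` times a positive multiple of `M - E`, whose only root in
`(0, 1)` is `t = √(1 - μ) / (√(1 - μ) + √μ)`; rationalising the denominator gives `t - 1/2 = l`.
-/

/-- The position of the Earth: E = (-1/2, 0). -/
noncomputable def Earth : EuclideanSpace ℝ (Fin 2) := WithLp.toLp 2 ![-(1/2 : ℝ), 0]

/-- The position of the Moon: M = (1/2, 0). -/
noncomputable def Moon : EuclideanSpace ℝ (Fin 2) := WithLp.toLp 2 ![(1/2 : ℝ), 0]

/-- The Euler potential V_μ(q) = -(1-μ)/‖q-E‖ - μ/‖q-M‖. -/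
noncomputable def eulerPotential (μ : ℝ) (q : EuclideanSpace ℝ (Fin 2)) : ℝ :=
  -(1 - μ) / ‖q - Earth‖ - μ / ‖q - Moon‖

open Real

/-- Masses `m₁` at `a` and `m₂` at `b` balance at `a + t • (b - a)` exactly when
`m₁ (1 - t)² = m₂ t²`, and this is the root of that equation in `[0, 1]`. -/
noncomputable def equilibriumRatio (m₁ m₂ : ℝ) : ℝ := √m₁ / (√m₁ + √m₂)

section EquilibriumRatio

variable {m₁ m₂ : ℝ}

theorem equilibriumRatio_mem_Ioo (hm₁ : 0 < m₁) (hm₂ : 0 < m₂) :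
    equilibriumRatio m₁ m₂ ∈ Set.Ioo 0 1 := by
  have := sqrt_pos.mpr hm₁
  have := sqrt_pos.mpr hm₂
  exact ⟨by unfold equilibriumRatio; positivity, (div_lt_one (by positivity)).mpr (by linarith)⟩

theorem half_lt_equilibriumRatio (hm₂ : 0 ≤ m₂) (h : m₂ < m₁) :
    1 / 2 < equilibriumRatio m₁ m₂ := by
  have := sqrt_lt_sqrt hm₂ h
  rw [equilibriumRatio, lt_div_iff₀ (by linarith [sqrt_nonneg m₂])]
  linarith

theorem equilibriumRatio_sub_half (hm₁ : 0 ≤ m₁) (hm₂ : 0 ≤ m₂) (h : m₁ ≠ m₂) :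
    equilibriumRatio m₁ m₂ - 1 / 2 = (m₁ + m₂ - 2 * √(m₁ * m₂)) / (2 * (m₁ - m₂)) := by
  obtain ⟨s, hs, rfl⟩ : ∃ s, 0 ≤ s ∧ s ^ 2 = m₁ := ⟨√m₁, sqrt_nonneg _, sq_sqrt hm₁⟩
  obtain ⟨u, hu, rfl⟩ : ∃ u, 0 ≤ u ∧ u ^ 2 = m₂ := ⟨√m₂, sqrt_nonneg _, sq_sqrt hm₂⟩
  rw [equilibriumRatio, ← mul_pow, sqrt_sq hs, sqrt_sq hu, sqrt_sq (mul_nonneg hs hu)]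
  have hsu : s ≠ u := by rintro rfl; exact h rfl
  have : s + u ≠ 0 := by intro h'; exact hsu (by linarith)
  have : s ^ 2 - u ^ 2 ≠ 0 := sub_ne_zero.mpr h
  field_simp
  ring

theorem mul_one_sub_sq_eq_mul_sq_iff (hm₁ : 0 < m₁) (hm₂ : 0 ≤ m₂) {t : ℝ} (ht₀ : 0 ≤ t)
    (ht₁ : t ≤ 1) : m₁ * (1 - t) ^ 2 = m₂ * t ^ 2 ↔ t = equilibriumRatio m₁ m₂ := by
  have hs := sqrt_pos.mpr hm₁
  have := sqrt_nonneg m₂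
  calc m₁ * (1 - t) ^ 2 = m₂ * t ^ 2 ↔ (√m₁ * (1 - t)) ^ 2 = (√m₂ * t) ^ 2 := by
        rw [mul_pow, mul_pow, sq_sqrt hm₁.le, sq_sqrt hm₂]
    _ ↔ √m₁ * (1 - t) = √m₂ * t :=
        pow_left_inj₀ (by nlinarith) (by positivity) two_ne_zero
    _ ↔ t = equilibriumRatio m₁ m₂ := by
        rw [equilibriumRatio, eq_div_iff (by positivity)]
        constructor <;> intro h <;> linarith

end EquilibriumRatio

section TwoCentres

variable {E : Type*} [NormedAddCommGroup E] [InnerProductSpace ℝ E]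

theorem hasFDerivAt_norm_sub {a q : E} (h : q ≠ a) :
    HasFDerivAt (fun x => ‖x - a‖) (‖q - a‖⁻¹ • innerSL ℝ (q - a)) q := by
  have hr : ‖q - a‖ ≠ 0 := norm_ne_zero_iff.mpr (sub_ne_zero.mpr h)
  have h := ((hasFDerivAt_id q).sub_const a).norm_sq.sqrt (by simpa using hr)
  simp only [_root_.id, sqrt_sq (norm_nonneg _)] at h
  convert h using 1
  ext v
  simp
  field_simp

theorem hasFDerivAt_inv_norm_sub {a q : E} (h : q ≠ a) :
    HasFDerivAt (fun x => ‖x - a‖⁻¹) (-(‖q - a‖ ^ 3)⁻¹ • innerSL ℝ (q - a)) q := by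
  have hr : ‖q - a‖ ≠ 0 := norm_ne_zero_iff.mpr (sub_ne_zero.mpr h)
  refine ((hasDerivAt_inv hr).comp_hasFDerivAt q (hasFDerivAt_norm_sub h)).congr_fderiv ?_
  rw [smul_smul]
  congr 1
  field_simp

noncomputable def twoCentrePotential (m₁ m₂ : ℝ) (a b x : E) : ℝ :=
  -m₁ / ‖x - a‖ - m₂ / ‖x - b‖

noncomputable def twoCentreGradient (m₁ m₂ : ℝ) (a b q : E) : E :=
  (m₁ / ‖q - a‖ ^ 3) • (q - a) + (m₂ / ‖q - b‖ ^ 3) • (q - b)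

theorem hasFDerivAt_twoCentrePotential (m₁ m₂ : ℝ) {a b q : E} (ha : q ≠ a) (hb : q ≠ b) :
    HasFDerivAt (twoCentrePotential m₁ m₂ a b)
      (innerSL ℝ (twoCentreGradient m₁ m₂ a b q)) q := by
  unfold twoCentrePotential
  simp only [div_eq_mul_inv]
  refine (((hasFDerivAt_inv_norm_sub ha).const_mul (-m₁)).sub
    ((hasFDerivAt_inv_norm_sub hb).const_mul m₂)).congr_fderiv ?_
  simp only [twoCentreGradient, map_add, map_smul, smul_smul]
  ext v
  simp
  ring

theorem fderiv_twoCentrePotential_eq_zero_iff (m₁ m₂ : ℝ) {a b q : E} (ha : q ≠ a) (hb : q ≠ b) :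
    fderiv ℝ (twoCentrePotential m₁ m₂ a b) q = 0 ↔
      twoCentreGradient m₁ m₂ a b q = 0 := by
  rw [(hasFDerivAt_twoCentrePotential m₁ m₂ ha hb).fderiv, ← map_zero (innerSL ℝ), innerSL_inj]

theorem smul_sub_add_smul_sub_eq_zero_iff {c₁ c₂ : ℝ} (h : c₁ + c₂ ≠ 0) (a b q : E) :
    c₁ • (q - a) + c₂ • (q - b) = 0 ↔ q = AffineMap.lineMap a b (c₂ / (c₁ + c₂)) := by
  have key : c₁ • (q - a) + c₂ • (q - b) =
      (c₁ + c₂) • (q - AffineMap.lineMap a b (c₂ / (c₁ + c₂))) := by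
    rw [AffineMap.lineMap_apply_module]
    match_scalars <;> field_simp
    ring
  rw [key, smul_eq_zero, sub_eq_zero, or_iff_right h]

theorem twoCentreGradient_lineMap (m₁ m₂ : ℝ) (a b : E) {t : ℝ} (ht₀ : 0 < t) (ht₁ : t < 1) :
    twoCentreGradient m₁ m₂ a b (AffineMap.lineMap a b t) =
      ((m₁ * (1 - t) ^ 2 - m₂ * t ^ 2) / (t ^ 2 * (1 - t) ^ 2 * ‖b - a‖ ^ 3)) • (b - a) := by
  have hqa : AffineMap.lineMap a b t - a = t • (b - a) := AffineMap.lineMap_vsub_left a b t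
  have hqb : AffineMap.lineMap a b t - b = -(1 - t) • (b - a) := by
    rw [neg_smul, ← smul_neg, neg_sub]; exact AffineMap.lineMap_vsub_right a b t
  rw [twoCentreGradient, hqa, hqb, norm_smul, norm_smul, smul_smul, smul_smul, ← add_smul]
  rcases eq_or_ne b a with rfl | hab
  · simp
  have : ‖b - a‖ ≠ 0 := norm_ne_zero_iff.mpr (sub_ne_zero.mpr hab)
  have : 1 - t ≠ 0 := (sub_pos.mpr ht₁).ne'
  congr 1
  rw [norm_neg, Real.norm_of_nonneg ht₀.le, Real.norm_of_nonneg (by linarith)]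
  field_simp
  ring

theorem fderiv_twoCentrePotential_eq_zero_iff_eq_lineMap {m₁ m₂ : ℝ} (hm₁ : 0 < m₁)
    (hm₂ : 0 < m₂) {a b q : E} (ha : q ≠ a) (hb : q ≠ b) :
    fderiv ℝ (twoCentrePotential m₁ m₂ a b) q = 0 ↔
      q = AffineMap.lineMap a b (equilibriumRatio m₁ m₂) := by
  rw [fderiv_twoCentrePotential_eq_zero_iff m₁ m₂ ha hb]
  constructor
  · intro hq
    have hc₁ : 0 < m₁ / ‖q - a‖ ^ 3 := by
      have := norm_pos_iff.mpr (sub_ne_zero.mpr ha); positivity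
    have hc₂ : 0 < m₂ / ‖q - b‖ ^ 3 := by
      have := norm_pos_iff.mpr (sub_ne_zero.mpr hb); positivity
    set t := m₂ / ‖q - b‖ ^ 3 / (m₁ / ‖q - a‖ ^ 3 + m₂ / ‖q - b‖ ^ 3)
    have hqt : q = AffineMap.lineMap a b t :=
      (smul_sub_add_smul_sub_eq_zero_iff (by positivity) a b q).mp hq
    have ht₀ : 0 < t := by positivity
    have ht₁ : t < 1 := (div_lt_one (by positivity)).mpr (by linarith)
    have hab : b - a ≠ 0 := by
      rintro hba
      rw [sub_eq_zero.mp hba, AffineMap.lineMap_same_apply] at hqt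
      exact ha hqt
    rw [hqt, twoCentreGradient_lineMap m₁ m₂ a b ht₀ ht₁, smul_eq_zero, or_iff_left hab,
      div_eq_zero_iff, or_iff_left (by positivity), sub_eq_zero,
      mul_one_sub_sq_eq_mul_sq_iff hm₁ hm₂.le ht₀.le ht₁.le] at hq
    rw [hqt, hq]
  · rintro rfl
    obtain ⟨ht₀, ht₁⟩ := equilibriumRatio_mem_Ioo hm₁ hm₂
    rw [twoCentreGradient_lineMap m₁ m₂ a b ht₀ ht₁,
      (mul_one_sub_sq_eq_mul_sq_iff hm₁ hm₂.le ht₀.le ht₁.le).mpr rfl, sub_self, zero_div,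
      zero_smul]

end TwoCentres

theorem ofLp_lineMap_earth_moon (t : ℝ) :
    (AffineMap.lineMap Earth Moon t).ofLp = ![t - 1 / 2, 0] := by
  ext i
  fin_cases i
  · simp [AffineMap.lineMap_apply_module, Earth, Moon]
    ring
  · simp [AffineMap.lineMap_apply_module, Earth, Moon]

/-- For 0 < μ < 1/2 and l = (1 - 2√(μ(1-μ)))/(2(1-2μ)), we have 0 < l < 1/2, and a
point q ∈ ℝ² ∖ {E, M} is a critical point of V_μ iff q = (l, 0). -/
theorem euler_potential_critical_point (μ : ℝ) (hμ0 : 0 < μ) (hμ1 : μ < 1/2)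
    (l : ℝ) (hl : l = (1 - 2 * Real.sqrt (μ * (1 - μ))) / (2 * (1 - 2 * μ))) :
    (0 < l ∧ l < 1/2) ∧
    ∀ q : EuclideanSpace ℝ (Fin 2), q ≠ Earth → q ≠ Moon →
      (fderiv ℝ (eulerPotential μ) q = 0 ↔ q = ![l, 0]) := by
  have hμ' : 0 < 1 - μ := by linarith
  have hl' : l = equilibriumRatio (1 - μ) μ - 1 / 2 := by
    rw [hl, equilibriumRatio_sub_half hμ'.le hμ0.le (by linarith), mul_comm (1 - μ)]
    ring_nf
  refine ⟨⟨?_, ?_⟩, fun q hE hM => ?_⟩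
  · linarith [half_lt_equilibriumRatio hμ0.le (by linarith : μ < 1 - μ)]
  · linarith [(equilibriumRatio_mem_Ioo hμ' hμ0).2]
  · rw [hl', ← ofLp_lineMap_earth_moon]
    exact (fderiv_twoCentrePotential_eq_zero_iff_eq_lineMap hμ' hμ0 hE hM).trans
      (WithLp.ofLp_injective 2).eq_iff.symm
end

section
/- Let c, g be real numbers with c ≠ 0, and consider the real polynomial f(X) = (cX² + 2X + g)(X² − 1). Then f is squarefree (equivalently, f has no repeated root in ℂ) if and only if c + g + 2 ≠ 0, c + g − 2 ≠ 0, and gc ≠ 1. Equivalently, f has a repeated root precisely when (c+g+2)(c+g−2)(gc−1) = 0. -/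
/-!
With `P = cX² + 2X + g` we have `f = P · (X - 1)(X + 1)`, and `f` is separable as soon as `P` is
(its discriminant is `4(1 - gc)`) and `P(±1) = c + g ± 2` are nonzero. Conversely, each vanishing
factor yields a real double root of `f`: `1`, `-1`, or `-g`, since `gc = 1` gives `P = c(X + g)²`.
Separability survives base change to `ℂ`, which gives the statement about complex double roots.
-/

open Polynomial

namespace Polynomial

theorem separable_quadratic {K : Type*} [Field K] {a b c : K} (h : discrim a b c ≠ 0) :
    (C a * X ^ 2 + C b * X + C c).Separable := by
  have hderiv : derivative (C a * X ^ 2 + C b * X + C c) = C (2 * a) * X + C b := by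
    simp only [derivative_add, derivative_C_mul_X_pow, derivative_C_mul_X, derivative_C, C_mul,
      Nat.cast_ofNat, map_ofNat]
    ring
  have hinv : C (discrim a b c)⁻¹ * C (discrim a b c) = (1 : K[X]) := by
    rw [← C_mul, inv_mul_cancel₀ h, C_1]
  -- `(2aX + b)² - 4a(aX² + bX + c) = b² - 4ac`
  refine ⟨C (discrim a b c)⁻¹ * C (-4 * a), C (discrim a b c)⁻¹ * (C (2 * a) * X + C b), ?_⟩
  simp only [hderiv, discrim, map_sub, map_mul, map_neg, map_pow, map_ofNat] at hinv ⊢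
  linear_combination hinv

theorem isCoprime_X_sub_C_of_not_isRoot {K : Type*} [Field K] {p : K[X]} {r : K}
    (h : ¬p.IsRoot r) : IsCoprime p (X - C r) :=
  ((irreducible_X_sub_C r).coprime_iff_not_dvd.2 (dvd_iff_isRoot.not.2 h)).symm

theorem X_sub_C_sq_dvd_mul_of_isRoot {R : Type*} [CommRing R] {p q : R[X]} {r : R}
    (hp : p.IsRoot r) (hq : q.IsRoot r) : (X - C r) ^ 2 ∣ p * q :=
  sq (X - C r) ▸ mul_dvd_mul (dvd_iff_isRoot.2 hp) (dvd_iff_isRoot.2 hq)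

theorem not_squarefree_of_X_sub_C_sq_dvd {R : Type*} [CommRing R] [Nontrivial R] {p : R[X]}
    {r : R} (h : (X - C r) ^ 2 ∣ p) : ¬Squarefree p :=
  fun hp => not_isUnit_X_sub_C r (hp _ (sq (X - C r) ▸ h))

end Polynomial

theorem separable_euler_xi_quartic {c g : ℝ} (h : (c + g + 2) * (c + g - 2) * (g * c - 1) ≠ 0) :
    ((C c * X ^ 2 + 2 * X + C g) * (X ^ 2 - 1)).Separable := by
  obtain ⟨h₁₂, h₃⟩ := mul_ne_zero_iff.1 h
  obtain ⟨h₁, h₂⟩ := mul_ne_zero_iff.1 h₁₂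
  have hP : (C c * X ^ 2 + 2 * X + C g).Separable := by
    have hdiscrim : discrim c 2 g ≠ 0 := by
      rw [discrim]; intro h; exact h₃ (by linarith)
    simpa only [C_ofNat] using separable_quadratic hdiscrim
  have hroots : (X ^ 2 - 1 : ℝ[X]) = (X - C 1) * (X - C (-1)) := by
    simp only [map_one, map_neg]; ring
  have hcop : IsCoprime (C c * X ^ 2 + 2 * X + C g) (X ^ 2 - 1) := by
    rw [hroots]
    refine (isCoprime_X_sub_C_of_not_isRoot ?_).mul_right (isCoprime_X_sub_C_of_not_isRoot ?_)
    · simp only [IsRoot.def, eval_add, eval_mul, eval_C, eval_pow, eval_X, eval_ofNat]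
      intro h; exact h₁ (by linarith)
    · simp only [IsRoot.def, eval_add, eval_mul, eval_C, eval_pow, eval_X, eval_ofNat]
      intro h; exact h₂ (by linarith)
  exact hP.mul (X_pow_sub_one_separable_iff.2 (by norm_num)) hcop

theorem exists_X_sub_C_sq_dvd_euler_xi_quartic {c g : ℝ}
    (h : (c + g + 2) * (c + g - 2) * (g * c - 1) = 0) :
    ∃ r : ℝ, (X - C r) ^ 2 ∣ (C c * X ^ 2 + 2 * X + C g) * (X ^ 2 - 1) := by
  rcases mul_eq_zero.1 h with h' | h₃
  · rcases mul_eq_zero.1 h' with h₁ | h₂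
    · refine ⟨1, X_sub_C_sq_dvd_mul_of_isRoot ?_ (by simp)⟩
      simp only [IsRoot.def, eval_add, eval_mul, eval_C, eval_pow, eval_X, eval_ofNat]
      linarith
    · refine ⟨-1, X_sub_C_sq_dvd_mul_of_isRoot ?_ (by simp)⟩
      simp only [IsRoot.def, eval_add, eval_mul, eval_C, eval_pow, eval_X, eval_ofNat]
      linarith
  · refine ⟨-g, Dvd.dvd.mul_right ⟨C c, ?_⟩ _⟩
    have hgc : C g * C c = (1 : ℝ[X]) := by
      rw [← C_mul, sub_eq_zero.1 h₃, C_1]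
    simp only [map_neg]
    linear_combination (-(2 * X) - C g) * hgc

theorem euler_xi_quartic_squarefree_iff_general (c g : ℝ) :
    (Squarefree ((C c * X ^ 2 + 2 * X + C g) * (X ^ 2 - 1)) ↔
      (c + g + 2 ≠ 0 ∧ c + g - 2 ≠ 0 ∧ g * c ≠ 1)) ∧
    ((∃ z : ℂ, (X - C z) ^ 2 ∣
        ((C c * X ^ 2 + 2 * X + C g) * (X ^ 2 - 1)).map (algebraMap ℝ ℂ)) ↔
      (c + g + 2) * (c + g - 2) * (g * c - 1) = 0) := by
  have hsf : Squarefree ((C c * X ^ 2 + 2 * X + C g) * (X ^ 2 - 1)) ↔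
      (c + g + 2) * (c + g - 2) * (g * c - 1) ≠ 0 := by
    refine ⟨fun hf h => ?_, fun h => (separable_euler_xi_quartic h).squarefree⟩
    obtain ⟨r, hr⟩ := exists_X_sub_C_sq_dvd_euler_xi_quartic h
    exact not_squarefree_of_X_sub_C_sq_dvd hr hf
  refine ⟨hsf.trans ?_, ⟨fun ⟨z, hz⟩ => ?_, fun h => ?_⟩⟩
  · rw [mul_ne_zero_iff, mul_ne_zero_iff, sub_ne_zero (a := g * c), and_assoc]
  · by_contra h
    exact not_squarefree_of_X_sub_C_sq_dvd hz (separable_euler_xi_quartic h).map.squarefree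
  · obtain ⟨r, hr⟩ := exists_X_sub_C_sq_dvd_euler_xi_quartic h
    exact ⟨r, by simpa using Polynomial.map_dvd (algebraMap ℝ ℂ) hr⟩

/-- The quartic f(X) = (cX² + 2X + g)(X² - 1) governing the ξ-motion of the Euler
problem is squarefree (equivalently, has no repeated complex root) if and only if
c + g + 2 ≠ 0, c + g - 2 ≠ 0 and gc ≠ 1; i.e. f has a repeated root precisely when
(c+g+2)(c+g-2)(gc-1) = 0. -/
theorem euler_xi_quartic_squarefree_iff (c g : ℝ) (hc : c ≠ 0) :
    (Squarefree ((C c * X ^ 2 + 2 * X + C g) * (X ^ 2 - 1)) ↔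
      (c + g + 2 ≠ 0 ∧ c + g - 2 ≠ 0 ∧ g * c ≠ 1)) ∧
    ((∃ z : ℂ, (X - C z) ^ 2 ∣
        ((C c * X ^ 2 + 2 * X + C g) * (X ^ 2 - 1)).map (algebraMap ℝ ℂ)) ↔
      (c + g + 2) * (c + g - 2) * (g * c - 1) = 0) :=
  euler_xi_quartic_squarefree_iff_general c g
end
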